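/- arXiv:1701.08456 — 6 statements merged into one kernel-verified Lean document; each statement's English description precedes it below -/
import Mathlib

section
/- Let a, b be real numbers with −1/2 ≤ a ≤ 0, b > 0 and a² + b² ≥ 1, and let Λ ⊂ ℝ² be the lattice generated over ℤ by v₁ = (1,0) and v₂ = (a,b). Then the Voronoi cell of 0, V(0) = {x ∈ ℝ² : ‖x‖ ≤ ‖x − λ‖ for all λ ∈ Λ}, equals the intersection of the six half-planes {x : |⟨x, v⟩| ≤ ‖v‖²/2} for v ∈ {(1,0), (a,b), (1+a,b)}. That is, when the angle θ between the basis vectors satisfies π/2 < θ ≤ 2π/3, the third relevant vector is (1+a, b). -/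
open scoped RealInnerProductSpace

/-!
The six vectors `v₁, v₁ + v₂, v₂, -v₁, -(v₁ + v₂), -v₂` cut the plane into six cones. For an
obtuse superbase, `⟪v₁, v₂⟫ ≤ 0 ≤ ⟪v₁, v₁ + v₂⟫, ⟪v₁ + v₂, v₂⟫` (here `a ≤ 0 ≤ 1 + a, a + a² + b²`),
any two consecutive ones make a non-obtuse angle. Every lattice vector is a combination
`p = k • w + l • w'` with `k, l ≥ 0` of a consecutive pair, and then, if `x` lies in the six
half-planes, `2⟪x, p⟫ ≤ k ‖w‖² + l ‖w'‖² ≤ ‖p‖²` because `k ≤ k²`, `l ≤ l²` and `⟪w, w'⟫ ≥ 0`.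
So `x` is at least as close to `0` as to `p`.
-/

section InnerProductSpace

variable {E : Type*} [NormedAddCommGroup E] [InnerProductSpace ℝ E]

theorem norm_le_norm_sub_iff_two_inner_le (x p : E) :
    ‖x‖ ≤ ‖x - p‖ ↔ 2 * ⟪x, p⟫ ≤ ‖p‖ ^ 2 := by
  rw [← sq_le_sq₀ (norm_nonneg _) (norm_nonneg _), norm_sub_sq_real]
  constructor <;> intro h <;> linarith

theorem abs_inner_le_half_norm_sq_iff (x w : E) :
    |⟪x, w⟫| ≤ ‖w‖ ^ 2 / 2 ↔ 2 * ⟪x, w⟫ ≤ ‖w‖ ^ 2 ∧ 2 * ⟪x, -w⟫ ≤ ‖-w‖ ^ 2 := by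
  rw [abs_le, inner_neg_right, norm_neg]
  constructor <;> rintro ⟨h, h'⟩ <;> constructor <;> linarith

theorem two_inner_le_norm_sq_zsmul_add_zsmul {x w w' : E} (hww' : 0 ≤ ⟪w, w'⟫)
    (hw : 2 * ⟪x, w⟫ ≤ ‖w‖ ^ 2) (hw' : 2 * ⟪x, w'⟫ ≤ ‖w'‖ ^ 2) {k l : ℤ} (hk : 0 ≤ k)
    (hl : 0 ≤ l) : 2 * ⟪x, k • w + l • w'⟫ ≤ ‖k • w + l • w'‖ ^ 2 := by
  simp only [← Int.cast_smul_eq_zsmul ℝ]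
  have hkk : (k : ℝ) ≤ (k : ℝ) ^ 2 := mod_cast Int.le_self_sq k
  have hll : (l : ℝ) ≤ (l : ℝ) ^ 2 := mod_cast Int.le_self_sq l
  have hk' : (0 : ℝ) ≤ k := mod_cast hk
  have hl' : (0 : ℝ) ≤ l := mod_cast hl
  calc 2 * ⟪x, (k : ℝ) • w + (l : ℝ) • w'⟫ = k * (2 * ⟪x, w⟫) + l * (2 * ⟪x, w'⟫) := by
        rw [inner_add_right, real_inner_smul_right, real_inner_smul_right]; ring
    _ ≤ k * ‖w‖ ^ 2 + l * ‖w'‖ ^ 2 := by gcongr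
    _ ≤ k ^ 2 * ‖w‖ ^ 2 + l ^ 2 * ‖w'‖ ^ 2 := by gcongr
    _ ≤ k ^ 2 * ‖w‖ ^ 2 + l ^ 2 * ‖w'‖ ^ 2 + 2 * (k * l) * ⟪w, w'⟫ :=
        le_add_of_nonneg_right (mul_nonneg (by positivity) hww')
    _ = ‖(k : ℝ) • w + (l : ℝ) • w'‖ ^ 2 := by
        rw [norm_add_sq_real, real_inner_smul_left, real_inner_smul_right, norm_smul, norm_smul,
          mul_pow, mul_pow, Real.norm_eq_abs, Real.norm_eq_abs, sq_abs, sq_abs]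
        ring

variable {v₁ v₂ : E}

theorem two_inner_le_norm_sq_of_obtuse_superbase_of_nonneg (h₁₂ : ⟪v₁, v₂⟫ ≤ 0)
    (h₁ : 0 ≤ ⟪v₁, v₁ + v₂⟫) (h₂ : 0 ≤ ⟪v₁ + v₂, v₂⟫) {x : E}
    (hx₁ : |⟪x, v₁⟫| ≤ ‖v₁‖ ^ 2 / 2) (hx₂ : |⟪x, v₂⟫| ≤ ‖v₂‖ ^ 2 / 2)
    (hx₃ : |⟪x, v₁ + v₂⟫| ≤ ‖v₁ + v₂‖ ^ 2 / 2) {m n : ℤ} (hn : 0 ≤ n) :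
    2 * ⟪x, m • v₁ + n • v₂⟫ ≤ ‖m • v₁ + n • v₂‖ ^ 2 := by
  rw [abs_inner_le_half_norm_sq_iff] at hx₁ hx₂ hx₃
  rcases le_total n m with hnm | hmn
  · have hp : m • v₁ + n • v₂ = (m - n) • v₁ + n • (v₁ + v₂) := by module
    rw [hp]
    exact two_inner_le_norm_sq_zsmul_add_zsmul h₁ hx₁.1 hx₃.1 (by omega) hn
  rcases le_total 0 m with hm | hm
  · have hp : m • v₁ + n • v₂ = m • (v₁ + v₂) + (n - m) • v₂ := by module
    rw [hp]
    exact two_inner_le_norm_sq_zsmul_add_zsmul h₂ hx₃.1 hx₂.1 hm (by omega)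
  · have hp : m • v₁ + n • v₂ = n • v₂ + (-m) • (-v₁) := by module
    rw [hp]
    refine two_inner_le_norm_sq_zsmul_add_zsmul ?_ hx₂.1 hx₁.2 hn (by omega)
    rw [inner_neg_right, real_inner_comm]
    exact neg_nonneg.mpr h₁₂

theorem two_inner_le_norm_sq_of_obtuse_superbase (h₁₂ : ⟪v₁, v₂⟫ ≤ 0)
    (h₁ : 0 ≤ ⟪v₁, v₁ + v₂⟫) (h₂ : 0 ≤ ⟪v₁ + v₂, v₂⟫) {x : E}
    (hx₁ : |⟪x, v₁⟫| ≤ ‖v₁‖ ^ 2 / 2) (hx₂ : |⟪x, v₂⟫| ≤ ‖v₂‖ ^ 2 / 2)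
    (hx₃ : |⟪x, v₁ + v₂⟫| ≤ ‖v₁ + v₂‖ ^ 2 / 2) (m n : ℤ) :
    2 * ⟪x, m • v₁ + n • v₂⟫ ≤ ‖m • v₁ + n • v₂‖ ^ 2 := by
  rcases le_total 0 n with hn | hn
  · exact two_inner_le_norm_sq_of_obtuse_superbase_of_nonneg h₁₂ h₁ h₂ hx₁ hx₂ hx₃ hn
  · -- `x ↦ -x` and `(m, n) ↦ (-m, -n)` preserve both the hypotheses and the conclusion.
    have hneg := two_inner_le_norm_sq_of_obtuse_superbase_of_nonneg (x := -x) (m := -m)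
      h₁₂ h₁ h₂ (by rwa [inner_neg_left, abs_neg]) (by rwa [inner_neg_left, abs_neg])
      (by rwa [inner_neg_left, abs_neg]) (neg_nonneg.mpr hn)
    rwa [neg_zsmul, neg_zsmul, ← neg_add, inner_neg_neg, norm_neg] at hneg

theorem voronoi_cell_eq_inter_of_obtuse_superbase (h₁₂ : ⟪v₁, v₂⟫ ≤ 0)
    (h₁ : 0 ≤ ⟪v₁, v₁ + v₂⟫) (h₂ : 0 ≤ ⟪v₁ + v₂, v₂⟫) :
    {x : E | ∀ p ∈ {p | ∃ m n : ℤ, p = m • v₁ + n • v₂}, ‖x‖ ≤ ‖x - p‖} =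
      {x | |⟪x, v₁⟫| ≤ ‖v₁‖ ^ 2 / 2} ∩ {x | |⟪x, v₂⟫| ≤ ‖v₂‖ ^ 2 / 2} ∩
        {x | |⟪x, v₁ + v₂⟫| ≤ ‖v₁ + v₂‖ ^ 2 / 2} := by
  ext x
  simp only [Set.mem_ofPred_eq, Set.mem_inter_iff, norm_le_norm_sub_iff_two_inner_le]
  constructor
  · intro h
    have hp (m n : ℤ) := h (m • v₁ + n • v₂) ⟨m, n, rfl⟩
    simp only [abs_inner_le_half_norm_sq_iff]
    refine ⟨⟨⟨?_, ?_⟩, ?_, ?_⟩, ?_, ?_⟩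
    · simpa using hp 1 0
    · simpa using hp (-1) 0
    · simpa using hp 0 1
    · simpa using hp 0 (-1)
    · simpa using hp 1 1
    · have h₃ := hp (-1) (-1)
      rwa [neg_one_zsmul, neg_one_zsmul, ← neg_add] at h₃
  · rintro ⟨⟨hx₁, hx₂⟩, hx₃⟩ _ ⟨m, n, rfl⟩
    exact two_inner_le_norm_sq_of_obtuse_superbase h₁₂ h₁ h₂ hx₁ hx₂ hx₃ m n

end InnerProductSpace

theorem voronoi_cell_eq_halfplanes_obtuse_general (a b : ℝ)
    (ha0 : -(1 / 2) ≤ a) (ha : a ≤ 0) (hab : 1 ≤ a ^ 2 + b ^ 2)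
    (v₁ v₂ v₃ : EuclideanSpace ℝ (Fin 2))
    (hv₁ : v₁ 0 = 1 ∧ v₁ 1 = 0)
    (hv₂ : v₂ 0 = a ∧ v₂ 1 = b)
    (hv₃ : v₃ 0 = 1 + a ∧ v₃ 1 = b)
    (Λ : Set (EuclideanSpace ℝ (Fin 2)))
    (hΛ : Λ = {p | ∃ m n : ℤ, p = m • v₁ + n • v₂}) :
    {x : EuclideanSpace ℝ (Fin 2) | ∀ p ∈ Λ, ‖x‖ ≤ ‖x - p‖} =
      {x | abs (⟪x, v₁⟫) ≤ ‖v₁‖ ^ 2 / 2} ∩ {x | abs (⟪x, v₂⟫) ≤ ‖v₂‖ ^ 2 / 2} ∩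
        {x | abs (⟪x, v₃⟫) ≤ ‖v₃‖ ^ 2 / 2} := by
  have hv₃_eq : v₃ = v₁ + v₂ := by
    ext i
    fin_cases i <;> simp [hv₁, hv₂, hv₃]
  have inner_eq (u w : EuclideanSpace ℝ (Fin 2)) : ⟪u, w⟫ = u 0 * w 0 + u 1 * w 1 := by
    simp [PiLp.inner_apply, Fin.sum_univ_two, mul_comm]
  subst hΛ hv₃_eq
  refine voronoi_cell_eq_inter_of_obtuse_superbase ?_ ?_ ?_ <;>
    simp only [inner_eq, PiLp.add_apply, hv₁, hv₂] <;> nlinarith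

/-- For a Minkowski-reduced basis `{(1,0),(a,b)}` of a two-dimensional lattice with
`−1/2 ≤ a ≤ 0`, `b > 0`, `a² + b² ≥ 1` (obtuse angle `π/2 < θ ≤ 2π/3`), the Voronoi cell
of `0` is the intersection of the six half-planes determined by the relevant vectors
`±(1,0)`, `±(a,b)`, `±(1+a,b)`. -/
theorem voronoi_cell_eq_halfplanes_obtuse (a b : ℝ)
    (ha0 : -(1 / 2) ≤ a) (ha : a ≤ 0) (hb : 0 < b) (hab : 1 ≤ a ^ 2 + b ^ 2)
    (v₁ v₂ v₃ : EuclideanSpace ℝ (Fin 2))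
    (hv₁ : v₁ 0 = 1 ∧ v₁ 1 = 0)
    (hv₂ : v₂ 0 = a ∧ v₂ 1 = b)
    (hv₃ : v₃ 0 = 1 + a ∧ v₃ 1 = b)
    (Λ : Set (EuclideanSpace ℝ (Fin 2)))
    (hΛ : Λ = {p | ∃ m n : ℤ, p = m • v₁ + n • v₂}) :
    {x : EuclideanSpace ℝ (Fin 2) | ∀ p ∈ Λ, ‖x‖ ≤ ‖x - p‖} =
      {x | abs (⟪x, v₁⟫) ≤ ‖v₁‖ ^ 2 / 2} ∩ {x | abs (⟪x, v₂⟫) ≤ ‖v₂‖ ^ 2 / 2} ∩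
        {x | abs (⟪x, v₃⟫) ≤ ‖v₃‖ ^ 2 / 2} :=
  voronoi_cell_eq_halfplanes_obtuse_general a b ha0 ha hab v₁ v₂ v₃ hv₁ hv₂ hv₃ Λ hΛ
end

section
/- Let a, b be real numbers with 0 ≤ a ≤ 1/2, b > 0 and a² + b² ≥ 1, and let Λ ⊂ ℝ² be the lattice generated over ℤ by (1,0) and (a,b). Then the Voronoi cell V(0) = {x ∈ ℝ² : ‖x‖ ≤ ‖x − λ‖ for all λ ∈ Λ} equals the convex hull of the six points ±(1/2, (a² + b² − a)/(2b)), ±(−1/2, (a² + b² − a)/(2b)), and ±((2a−1)/2, (b² + a − a²)/(2b)). -/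
/-!
The vertex `p₁` is the circumcentre of the triangle `0, v₁, v₂`, and the other vertices are
`±p₁`, `±(p₁ - v₁)`, `±(v₂ - p₁)`. For a reduced basis with non-obtuse angle, the quadratic form
`‖m v₁ + n v₂‖²` dominates `m ‖v₁‖² + n ‖v₂‖²` on integers, which says exactly that `p₁` lies in
the Voronoi cell; its lattice translates at the same distance from `0` and their negatives then
lie there too, and the cell is convex.

Conversely, up to the central symmetry `x ↦ -x` we may assume `x` lies to the left of `p₁`. That
half plane is covered by the three cones from `0` over the hexagon edges `[p₁, p₃]`, `[p₃, p₂]`,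
`[p₂, -p₁]`, and these edges lie on the perpendicular bisectors of `v₂`, `v₂ - v₁`, `-v₁`; the
Voronoi inequality for that lattice vector puts `x` in the triangle spanned by `0` and the edge.
-/

open RealInnerProductSpace Submodule

theorem Int.mul_sub_one_nonneg (m : ℤ) : 0 ≤ m * (m - 1) := by
  rcases le_or_gt 1 m with h | h
  · exact mul_nonneg (by omega) (by omega)
  · exact mul_nonneg_of_nonpos_of_nonpos (by omega) (by omega)

theorem le_int_quadratic_form {A B c : ℝ} (hc : 0 ≤ c) (hcA : 2 * c ≤ A) (hAB : A ≤ B)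
    (m n : ℤ) : m * A + n * B ≤ m ^ 2 * A + 2 * (m * n) * c + n ^ 2 * B := by
  have hm : (0 : ℝ) ≤ m * (m - 1) := by exact_mod_cast m.mul_sub_one_nonneg
  have hn : (0 : ℝ) ≤ n * (n - 1) := by exact_mod_cast n.mul_sub_one_nonneg
  rcases le_or_gt 0 (m * n) with hmn | hmn
  · have : (0 : ℝ) ≤ m * n := by exact_mod_cast hmn
    nlinarith [mul_nonneg this hc]
  · -- `2mnc ≥ mnA`, `n(n-1)B ≥ n(n-1)A`, and `m² + n² + mn - m - n = (m+n)(m+n-1) - mn > 0`.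
    have hmn' : (m * n : ℝ) ≤ -1 := by exact_mod_cast (show m * n ≤ -1 by omega)
    have hk : (0 : ℝ) ≤ (m + n) * (m + n - 1) := by
      exact_mod_cast (m + n).mul_sub_one_nonneg
    nlinarith [mul_le_mul_of_nonneg_left hAB hn,
      mul_le_mul_of_nonpos_left hcA (by linarith : (m * n : ℝ) ≤ 0)]

section Voronoi

variable {E : Type*} [NormedAddCommGroup E]

def voronoiCell (L : Set E) : Set E := {x | ∀ p ∈ L, ‖x‖ ≤ ‖x - p‖}

theorem neg_mem_voronoiCell {S : Type*} [SetLike S E] [AddSubgroupClass S E] {L : S} {x : E}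
    (hx : x ∈ voronoiCell (L : Set E)) : -x ∈ voronoiCell (L : Set E) := by
  intro q hq
  rw [norm_neg, ← neg_add', norm_neg]
  simpa [sub_neg_eq_add] using hx (-q) (neg_mem hq)

variable [InnerProductSpace ℝ E]

theorem mem_voronoiCell_iff {L : Set E} {x : E} :
    x ∈ voronoiCell L ↔ ∀ p ∈ L, 2 * ⟪x, p⟫ ≤ ‖p‖ ^ 2 := by
  refine forall₂_congr fun p _ => ?_
  rw [← sq_le_sq₀ (norm_nonneg _) (norm_nonneg _), norm_sub_sq_real]
  constructor <;> intro h <;> linarith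

theorem convex_voronoiCell (L : Set E) : Convex ℝ (voronoiCell L) := by
  intro x hx y hy s t hs ht hst
  rw [mem_voronoiCell_iff] at hx hy ⊢
  intro p hp
  calc 2 * ⟪s • x + t • y, p⟫ = s * (2 * ⟪x, p⟫) + t * (2 * ⟪y, p⟫) := by
        rw [inner_add_left, real_inner_smul_left, real_inner_smul_left]; ring
    _ ≤ s * ‖p‖ ^ 2 + t * ‖p‖ ^ 2 := by gcongr; exacts [hx p hp, hy p hp]
    _ = ‖p‖ ^ 2 := by rw [← add_mul, hst, one_mul]

/-- `2 ⟪x, p⟫ = ‖p‖²` says that `x` is as far from `p` as from `0`. -/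
theorem sub_mem_voronoiCell {S : Type*} [SetLike S E] [AddSubgroupClass S E] {L : S} {x p : E}
    (hx : x ∈ voronoiCell (L : Set E)) (hp : p ∈ L) (hxp : 2 * ⟪x, p⟫ = ‖p‖ ^ 2) :
    x - p ∈ voronoiCell (L : Set E) := by
  rw [mem_voronoiCell_iff] at hx ⊢
  intro q hq
  have h := hx (p + q) (add_mem hp hq)
  rw [inner_add_right, norm_add_sq_real] at h
  rw [inner_sub_left]
  linarith

theorem mem_voronoiCell_span_pair {v₁ v₂ p : E}
    (h₁₂ : 0 ≤ ⟪v₁, v₂⟫) (h₁₂₁ : 2 * ⟪v₁, v₂⟫ ≤ ‖v₁‖ ^ 2) (h₁₂₂ : ‖v₁‖ ≤ ‖v₂‖)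
    (hp₁ : 2 * ⟪p, v₁⟫ = ‖v₁‖ ^ 2) (hp₂ : 2 * ⟪p, v₂⟫ = ‖v₂‖ ^ 2) :
    p ∈ voronoiCell (span ℤ {v₁, v₂} : Set E) := by
  rw [mem_voronoiCell_iff]
  rintro _ hq
  obtain ⟨m, n, rfl⟩ := mem_span_pair.mp hq
  rw [← Int.cast_smul_eq_zsmul ℝ, ← Int.cast_smul_eq_zsmul ℝ, norm_add_sq_real, norm_smul,
    norm_smul, inner_add_right, real_inner_smul_left, real_inner_smul_right,
    real_inner_smul_right, real_inner_smul_right, mul_pow, mul_pow, Real.norm_eq_abs,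
    Real.norm_eq_abs, sq_abs, sq_abs]
  linear_combination (m : ℝ) * hp₁ + (n : ℝ) * hp₂ +
    le_int_quadratic_form h₁₂ h₁₂₁ (pow_le_pow_left₀ (norm_nonneg _) h₁₂₂ 2) m n

theorem convexHull_hexagon_subset_voronoiCell {v₁ v₂ p : E}
    (h₁₂ : 0 ≤ ⟪v₁, v₂⟫) (h₁₂₁ : 2 * ⟪v₁, v₂⟫ ≤ ‖v₁‖ ^ 2) (h₁₂₂ : ‖v₁‖ ≤ ‖v₂‖)
    (hp₁ : 2 * ⟪p, v₁⟫ = ‖v₁‖ ^ 2) (hp₂ : 2 * ⟪p, v₂⟫ = ‖v₂‖ ^ 2) :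
    convexHull ℝ {p, -p, p - v₁, -(p - v₁), v₂ - p, -(v₂ - p)} ⊆
      voronoiCell (span ℤ {v₁, v₂} : Set E) := by
  have hp := mem_voronoiCell_span_pair h₁₂ h₁₂₁ h₁₂₂ hp₁ hp₂
  have hpv₁ := sub_mem_voronoiCell hp (subset_span (by simp)) hp₁
  have hpv₂ := sub_mem_voronoiCell hp (subset_span (by simp)) hp₂
  refine convexHull_min ?_ (convex_voronoiCell _)
  rintro q (rfl | rfl | rfl | rfl | rfl | rfl)
  · exact hp
  · exact neg_mem_voronoiCell hp
  · exact hpv₁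
  · exact neg_mem_voronoiCell hpv₁
  · simpa using neg_mem_voronoiCell hpv₂
  · simpa using hpv₂

theorem zero_mem_convexHull_of_neg_mem {S : Set E} {u : E} (hu : u ∈ S) (hnu : -u ∈ S) :
    0 ∈ convexHull ℝ S := by
  simpa using convex_convexHull ℝ S (subset_convexHull ℝ S hu) (subset_convexHull ℝ S hnu)
    (by norm_num : (0 : ℝ) ≤ 1 / 2) (by norm_num : (0 : ℝ) ≤ 1 / 2) (by norm_num)

theorem smul_add_smul_mem_convexHull {S : Set E} {u v w : E} {α β : ℝ}
    (hu : u ∈ S) (hv : v ∈ S) (h0 : 0 ∈ convexHull ℝ S) (hα : 0 ≤ α) (hβ : 0 ≤ β) (hw : w ≠ 0)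
    (huw : 2 * ⟪u, w⟫ = ‖w‖ ^ 2) (hvw : 2 * ⟪v, w⟫ = ‖w‖ ^ 2)
    (hxw : 2 * ⟪α • u + β • v, w⟫ ≤ ‖w‖ ^ 2) : α • u + β • v ∈ convexHull ℝ S := by
  have hαβ : α + β ≤ 1 := by
    rw [inner_add_left, real_inner_smul_left, real_inner_smul_left] at hxw
    have : (α + β) * ‖w‖ ^ 2 ≤ 1 * ‖w‖ ^ 2 := by linear_combination hxw - α * huw - β * hvw
    exact le_of_mul_le_mul_right this (by positivity)
  obtain ⟨z, hz, hzuv⟩ := (convex_convexHull ℝ S).exists_mem_add_smul_eq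
    (subset_convexHull ℝ S hu) (subset_convexHull ℝ S hv) hα hβ
  rw [← hzuv]
  exact (convex_convexHull ℝ S).smul_mem_of_zero_mem h0 hz ⟨add_nonneg hα hβ, hαβ⟩

end Voronoi

section Plane

local notation "ℝ²" => EuclideanSpace ℝ (Fin 2)

theorem inner_fin_two (x y : ℝ²) : ⟪x, y⟫ = x 0 * y 0 + x 1 * y 1 := by
  simp [PiLp.inner_apply, Fin.sum_univ_two, mul_comm]

theorem norm_sq_fin_two (x : ℝ²) : ‖x‖ ^ 2 = x 0 ^ 2 + x 1 ^ 2 := by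
  simp [EuclideanSpace.real_norm_sq_eq, Fin.sum_univ_two]

def cross (u v : ℝ²) : ℝ := u 0 * v 1 - u 1 * v 0

theorem cross_smul_eq_add (u v x : ℝ²) : cross u v • x = cross x v • u + cross u x • v := by
  ext i; fin_cases i <;> simp [cross] <;> ring

/-- The Plücker relation. -/
theorem cross_mul_cross_eq_sub (u v w x : ℝ²) :
    cross u x * cross v w = cross u w * cross v x - cross u v * cross w x := by
  simp only [cross]; ring

theorem cross_pos_of_cross_pos {p u v x : ℝ²} (hpu : 0 < cross p u) (hpv : 0 < cross p v)
    (hpx : 0 ≤ cross p x) (hux : 0 < cross u x) (hvx : cross v x ≤ 0) : 0 < cross u v := by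
  refine pos_of_mul_pos_right ?_ hpx
  rw [cross_mul_cross_eq_sub]
  nlinarith [mul_pos hpv hux, mul_nonneg hpu.le (neg_nonneg.mpr hvx)]

theorem mem_convexHull_of_cross_nonneg {S : Set ℝ²} {u v w x : ℝ²}
    (hu : u ∈ S) (hv : v ∈ S) (h0 : 0 ∈ convexHull ℝ S)
    (huv : 0 < cross u v) (hux : 0 ≤ cross u x) (hxv : 0 ≤ cross x v) (hw : w ≠ 0)
    (huw : 2 * ⟪u, w⟫ = ‖w‖ ^ 2) (hvw : 2 * ⟪v, w⟫ = ‖w‖ ^ 2) (hxw : 2 * ⟪x, w⟫ ≤ ‖w‖ ^ 2) :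
    x ∈ convexHull ℝ S := by
  have hx : x = (cross x v / cross u v) • u + (cross u x / cross u v) • v := by
    rw [div_eq_inv_mul, div_eq_inv_mul, mul_smul, mul_smul, ← smul_add, ← cross_smul_eq_add,
      inv_smul_smul₀ huv.ne']
  rw [hx] at hxw ⊢
  exact smul_add_smul_mem_convexHull hu hv h0 (div_nonneg hxv huv.le) (div_nonneg hux huv.le)
    hw huw hvw hxw

theorem mem_convexHull_hexagon_of_cross_nonneg {v₁ v₂ p x : ℝ²}
    (hp₁ : 2 * ⟪p, v₁⟫ = ‖v₁‖ ^ 2) (hp₂ : 2 * ⟪p, v₂⟫ = ‖v₂‖ ^ 2)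
    (hv₁p : 0 < cross v₁ p) (hpv₂ : 0 < cross p v₂)
    (hx : x ∈ voronoiCell (span ℤ {v₁, v₂} : Set ℝ²)) (hpx : 0 ≤ cross p x) :
    x ∈ convexHull ℝ {p, -p, p - v₁, -(p - v₁), v₂ - p, -(v₂ - p)} := by
  set S : Set ℝ² := {p, -p, p - v₁, -(p - v₁), v₂ - p, -(v₂ - p)}
  have h0 : (0 : ℝ²) ∈ convexHull ℝ S :=
    zero_mem_convexHull_of_neg_mem (u := p) (by simp [S]) (by simp [S])
  have hv₁ : v₁ ∈ span ℤ {v₁, v₂} := subset_span (by simp)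
  have hv₂ : v₂ ∈ span ℤ {v₁, v₂} := subset_span (by simp)
  rw [mem_voronoiCell_iff] at hx
  have hxv₂ := hx v₂ hv₂
  have hxv₂₁ := hx (v₂ - v₁) (sub_mem hv₂ hv₁)
  have hxv₁ := hx (-v₁) (neg_mem hv₁)
  have hpq₃ : 0 < cross p (v₂ - p) := by
    simp only [cross, PiLp.sub_apply] at hpv₂ ⊢; linarith
  have hpq₂ : 0 < cross p (p - v₁) := by
    simp only [cross, PiLp.sub_apply] at hv₁p ⊢; linarith
  have hv₂₀ : v₂ ≠ 0 := by rintro rfl; simp [cross] at hpv₂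
  have hv₁₀ : -v₁ ≠ 0 := by rw [neg_ne_zero]; rintro rfl; simp [cross] at hv₁p
  have hv₂₁₀ : v₂ - v₁ ≠ 0 := by
    rw [sub_ne_zero]; rintro rfl; simp only [cross] at hv₁p hpv₂; linarith
  rcases le_or_gt (cross (v₂ - p) x) 0 with h₃ | h₃
  · refine mem_convexHull_of_cross_nonneg (by simp [S]) (by simp [S]) h0 hpq₃ hpx
      (by simp only [cross] at h₃ ⊢; linarith) hv₂₀ hp₂ ?_ (by simpa using hxv₂)
    rw [inner_sub_left, real_inner_self_eq_norm_sq]; linarith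
  rcases le_total 0 (cross (p - v₁) x) with h₂ | h₂
  · refine mem_convexHull_of_cross_nonneg (u := p - v₁) (v := -p) (by simp [S]) (by simp [S]) h0
      (by simp only [cross, PiLp.neg_apply] at hpq₂ ⊢; linarith) h₂
      (by simp only [cross, PiLp.neg_apply] at hpx ⊢; linarith) hv₁₀ ?_ ?_ (by simpa using hxv₁)
    · rw [inner_neg_right, inner_sub_left, real_inner_self_eq_norm_sq, norm_neg]; linarith
    · rw [inner_neg_neg, norm_neg, hp₁]
  refine mem_convexHull_of_cross_nonneg (by simp [S]) (by simp [S]) h0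
    (cross_pos_of_cross_pos hpq₃ hpq₂ hpx h₃ h₂) h₃.le
    (by simp only [cross] at h₂ ⊢; linarith) hv₂₁₀ ?_ ?_ (by simpa using hxv₂₁)
  · rw [norm_sub_sq_real, inner_sub_left, inner_sub_right, inner_sub_right,
      real_inner_self_eq_norm_sq, real_inner_comm v₁ v₂]
    linarith
  · rw [norm_sub_sq_real, inner_sub_left, inner_sub_right, inner_sub_right,
      real_inner_self_eq_norm_sq, real_inner_comm v₁ v₂]
    linarith

theorem voronoiCell_subset_convexHull_hexagon {v₁ v₂ p : ℝ²}
    (hp₁ : 2 * ⟪p, v₁⟫ = ‖v₁‖ ^ 2) (hp₂ : 2 * ⟪p, v₂⟫ = ‖v₂‖ ^ 2)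
    (hv₁p : 0 < cross v₁ p) (hpv₂ : 0 < cross p v₂) :
    voronoiCell (span ℤ {v₁, v₂} : Set ℝ²) ⊆
      convexHull ℝ {p, -p, p - v₁, -(p - v₁), v₂ - p, -(v₂ - p)} := by
  intro x hx
  rcases le_total 0 (cross p x) with hpx | hpx
  · exact mem_convexHull_hexagon_of_cross_nonneg hp₁ hp₂ hv₁p hpv₂ hx hpx
  have hS : -({p, -p, p - v₁, -(p - v₁), v₂ - p, -(v₂ - p)} : Set ℝ²) =
      {p, -p, p - v₁, -(p - v₁), v₂ - p, -(v₂ - p)} := by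
    ext; simp only [Set.mem_neg, Set.mem_insert_iff, Set.mem_singleton_iff, neg_eq_iff_eq_neg,
      neg_neg]
    tauto
  rw [← Set.neg_mem_neg, ← convexHull_neg, hS]
  refine mem_convexHull_hexagon_of_cross_nonneg hp₁ hp₂ hv₁p hpv₂ (neg_mem_voronoiCell hx) ?_
  simp only [cross, PiLp.neg_apply] at hpx ⊢; linarith

end Plane

/-- For a Minkowski-reduced basis `{(1,0),(a,b)}` with `0 ≤ a ≤ 1/2`, `b > 0`,
`a² + b² ≥ 1`, the Voronoi cell of `0` is the convex hull of the six vertices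
`±(1/2, (a²+b²−a)/(2b))`, `±(−1/2, (a²+b²−a)/(2b))`, `±((2a−1)/2, (b²+a−a²)/(2b))`. -/
theorem voronoi_cell_eq_convexHull_vertices (a b : ℝ)
    (ha0 : 0 ≤ a) (ha : a ≤ 1 / 2) (hb : 0 < b) (hab : 1 ≤ a ^ 2 + b ^ 2)
    (v₁ v₂ : EuclideanSpace ℝ (Fin 2))
    (hv₁ : v₁ 0 = 1 ∧ v₁ 1 = 0)
    (hv₂ : v₂ 0 = a ∧ v₂ 1 = b)
    (Λ : Set (EuclideanSpace ℝ (Fin 2)))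
    (hΛ : Λ = {p | ∃ m n : ℤ, p = m • v₁ + n • v₂})
    (p₁ p₂ p₃ : EuclideanSpace ℝ (Fin 2))
    (hp₁ : p₁ 0 = 1 / 2 ∧ p₁ 1 = (a ^ 2 + b ^ 2 - a) / (2 * b))
    (hp₂ : p₂ 0 = -(1 / 2) ∧ p₂ 1 = (a ^ 2 + b ^ 2 - a) / (2 * b))
    (hp₃ : p₃ 0 = (2 * a - 1) / 2 ∧ p₃ 1 = (b ^ 2 + a - a ^ 2) / (2 * b)) :
    {x : EuclideanSpace ℝ (Fin 2) | ∀ p ∈ Λ, ‖x‖ ≤ ‖x - p‖} =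
      convexHull ℝ ({p₁, -p₁, p₂, -p₂, p₃, -p₃} : Set (EuclideanSpace ℝ (Fin 2))) := by
  obtain ⟨hv₁0, hv₁1⟩ := hv₁
  obtain ⟨hv₂0, hv₂1⟩ := hv₂
  obtain ⟨hp₁0, hp₁1⟩ := hp₁
  have hp₂' : p₂ = p₁ - v₁ := by
    ext i; fin_cases i <;> simp [hp₂, hp₁0, hp₁1, hv₁0, hv₁1]; norm_num
  have hp₃' : p₃ = v₂ - p₁ := by
    ext i; fin_cases i <;> simp [hp₃, hp₁0, hp₁1, hv₂0, hv₂1]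
    · ring
    · field_simp; ring
  have hΛ' : Λ = span ℤ {v₁, v₂} := by
    ext q; simp [hΛ, mem_span_pair, eq_comm]
  subst hp₂' hp₃' hΛ'
  have hv₁v₂ : ‖v₁‖ ≤ ‖v₂‖ := by
    rw [← sq_le_sq₀ (norm_nonneg _) (norm_nonneg _), norm_sq_fin_two, norm_sq_fin_two]
    simp only [hv₁0, hv₁1, hv₂0, hv₂1]; linarith
  refine (voronoiCell_subset_convexHull_hexagon ?hp₁ ?hp₂ ?hv₁p ?hpv₂).antisymm
    (convexHull_hexagon_subset_voronoiCell ?h₁₂ ?h₁₂₁ hv₁v₂ ?hp₁ ?hp₂) <;>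
    simp only [inner_fin_two, norm_sq_fin_two, cross, hv₁0, hv₁1, hv₂0, hv₂1, hp₁0, hp₁1]
  case hp₁ => ring
  case hp₂ => field_simp; ring
  case hv₁p =>
    have : 0 < a ^ 2 + b ^ 2 - a := by linarith
    field_simp; linarith
  case hpv₂ => field_simp; nlinarith
  case h₁₂ => linarith
  case h₁₂₁ => linarith
end

section
/- Let a, b be real numbers with 0 ≤ a ≤ 1/2, b > 0 and a² + b² ≥ 1, let Λ ⊂ ℝ² be the lattice generated over ℤ by (1,0) and (a,b), let V(0) = {x ∈ ℝ² : ‖x‖ ≤ ‖x − λ‖ for all λ ∈ Λ} be the Voronoi cell of 0, and let B(0) = [−1/2, 1/2] × [−b/2, b/2] be the Babai (nearest-plane) cell of 0. Then the two-dimensional Lebesgue measure of B(0) ∩ V(0)ᶜ divided by the Lebesgue measure of B(0) equals (a − a²)/(4b²). -/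
open MeasureTheory Set

/-!
Inside the Babai box only the four lattice vectors `±(a, b)`, `±(a - 1, b)` are Voronoi-relevant:
a lattice vector `(m + n a, n b)` with `|n| ≥ 2` lies too high, for `n = 0` the box already
respects the bisectors of `±(1, 0)`, and for `n = ±1` the nearest integer to the first coordinate
decides. So the error region is the part of the box beyond four perpendicular bisectors: four
corner triangles, swapped in pairs by `x ↦ -x`, with legs `(1 - a)/2`, `a (1 - a)/(2b)` and
`a/2`, `a (1 - a)/(2b)`. Their total area is `a (1 - a)/(4b)`, against the area `b` of the box.
-/

section RegionBetween

variable {α : Type*} [MeasurableSpace α] {μ : Measure α} {f g : α → ℝ} {s : Set α}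

theorem volume_region_between_oc_eq_lintegral [SFinite μ] (hf : Measurable f)
    (hg : Measurable g) (hs : MeasurableSet s) :
    μ.prod volume {p : α × ℝ | p.1 ∈ s ∧ p.2 ∈ Ioc (f p.1) (g p.1)} =
      ∫⁻ y in s, ENNReal.ofReal (g y - f y) ∂μ := by
  rw [Measure.prod_apply (measurableSet_region_between_oc hf hg hs), ← lintegral_indicator hs]
  congr 1 with x
  by_cases hx : x ∈ s
  · simp only [indicator_of_mem hx, preimage, mem_ofPred_eq, hx, true_and]
    exact Real.volume_Ioc
  · simp [hx]

end RegionBetween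

theorem norm_sub_lt_norm_iff {E : Type*} [NormedAddCommGroup E] [InnerProductSpace ℝ E]
    (x p : E) : ‖x - p‖ < ‖x‖ ↔ ‖p‖ ^ 2 < 2 * inner ℝ x p := by
  rw [← sq_lt_sq₀ (norm_nonneg _) (norm_nonneg _), norm_sub_sq_real]
  constructor <;> intro h <;> linarith

theorem sq_le_sq_sub_intCast {t : ℝ} (ht : |t| ≤ 1 / 2) (m : ℤ) : t ^ 2 ≤ (t - m) ^ 2 := by
  have hm : |(m : ℝ)| ≤ (m : ℝ) ^ 2 := by
    rw [← Int.cast_abs, ← Int.natCast_natAbs]; exact_mod_cast Int.natAbs_le_self_sq m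
  nlinarith [le_abs_self (t * m), abs_mul t m, mul_le_mul_of_nonneg_right ht (abs_nonneg (m : ℝ))]

namespace Babai

def closerHalfPlane (p : ℝ × ℝ) : Set (ℝ × ℝ) :=
  {x | p.1 ^ 2 + p.2 ^ 2 < 2 * (x.1 * p.1 + x.2 * p.2)}

theorem measurableSet_closerHalfPlane (p : ℝ × ℝ) : MeasurableSet (closerHalfPlane p) :=
  measurableSet_lt measurable_const (by fun_prop)

theorem neg_mem_closerHalfPlane_neg {p x : ℝ × ℝ} :
    -x ∈ closerHalfPlane (-p) ↔ x ∈ closerHalfPlane p := by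
  simp [closerHalfPlane]

theorem norm_sub_lt_norm_iff_mem_closerHalfPlane (x p : EuclideanSpace ℝ (Fin 2)) :
    ‖x - p‖ < ‖x‖ ↔ (x 0, x 1) ∈ closerHalfPlane (p 0, p 1) := by
  rw [norm_sub_lt_norm_iff, EuclideanSpace.norm_sq_eq, EuclideanSpace.inner_eq_star_dotProduct]
  simp [closerHalfPlane, Fin.sum_univ_two, dotProduct, mul_comm]

def box (b : ℝ) : Set (ℝ × ℝ) := Icc (-(1 / 2)) (1 / 2) ×ˢ Icc (-(b / 2)) (b / 2)

theorem measurableSet_box (b : ℝ) : MeasurableSet (box b) :=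
  measurableSet_Icc.prod measurableSet_Icc

theorem neg_box (b : ℝ) : -box b = box b := by
  simp [box]

theorem volume_box (b : ℝ) : volume (box b) = ENNReal.ofReal b := by
  rw [box, Measure.volume_eq_prod, Measure.prod_prod, Real.volume_Icc, Real.volume_Icc,
    ← ENNReal.ofReal_mul (by norm_num)]
  norm_num

def latticePoint (a b : ℝ) (m n : ℤ) : ℝ × ℝ := (m + n * a, n * b)

theorem latticePoint_neg (a b : ℝ) (m n : ℤ) :
    latticePoint a b (-m) (-n) = -latticePoint a b m n := by
  ext <;> simp [latticePoint]; ring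

def relevantHalfPlanes (a b : ℝ) : Set (ℝ × ℝ) :=
  closerHalfPlane (a, b) ∪ closerHalfPlane (a - 1, b)

variable {a b : ℝ}

theorem notMem_closerHalfPlane_latticePoint_of_nonneg (ha₀ : 0 ≤ a) (ha : a ≤ 1 / 2)
    (hb : 1 / 2 ≤ b) {x : ℝ × ℝ} (hx : x ∈ box b) (hrel : x ∉ relevantHalfPlanes a b)
    (m : ℤ) {n : ℤ} (hn : 0 ≤ n) : x ∉ closerHalfPlane (latticePoint a b m n) := by
  obtain ⟨⟨hu₁, hu₂⟩, hw₁, hw₂⟩ := hx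
  simp only [relevantHalfPlanes, closerHalfPlane, latticePoint, mem_union, mem_ofPred_eq,
    not_or, not_lt] at hrel ⊢
  obtain ⟨h₁, h₂⟩ := hrel
  obtain rfl | rfl | hn₂ : n = 0 ∨ n = 1 ∨ 2 ≤ n := by omega
  · have := sq_le_sq_sub_intCast (abs_le.2 ⟨hu₁, hu₂⟩) m
    push_cast
    nlinarith
  · -- the integers nearest to `x.1 - a ∈ [-1, 1/2]` are among `0` and `-1`
    rcases le_or_gt (-(1 / 2)) (x.1 - a) with ht | ht
    · have := sq_le_sq_sub_intCast (abs_le.2 ⟨ht, by linarith⟩) m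
      push_cast
      nlinarith
    · have := sq_le_sq_sub_intCast (t := x.1 - a + 1)
        (abs_le.2 ⟨by linarith, by linarith⟩) (m + 1)
      push_cast at this ⊢
      nlinarith
  · have hgap : 3 * b / 2 ≤ n * b - x.2 := by
      have : (2 : ℝ) ≤ n := by exact_mod_cast hn₂
      nlinarith
    have := pow_le_pow_left₀ (by linarith) hgap 2
    nlinarith [sq_nonneg (x.1 - (m + n * a))]

theorem notMem_closerHalfPlane_latticePoint (ha₀ : 0 ≤ a) (ha : a ≤ 1 / 2) (hb : 1 / 2 ≤ b)
    {x : ℝ × ℝ} (hx : x ∈ box b) (hrel : x ∉ relevantHalfPlanes a b)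
    (hrel' : -x ∉ relevantHalfPlanes a b) (m n : ℤ) :
    x ∉ closerHalfPlane (latticePoint a b m n) := by
  rcases le_total 0 n with hn | hn
  · exact notMem_closerHalfPlane_latticePoint_of_nonneg ha₀ ha hb hx hrel m hn
  · rw [← neg_mem_closerHalfPlane_neg, ← latticePoint_neg]
    have hx' : -x ∈ box b := by rwa [← neg_box, neg_mem_neg]
    exact notMem_closerHalfPlane_latticePoint_of_nonneg ha₀ ha hb hx' hrel' (-m) (by omega)

theorem relevantHalfPlanes_subset_iUnion :
    relevantHalfPlanes a b ⊆ ⋃ (m : ℤ) (n : ℤ), closerHalfPlane (latticePoint a b m n) := by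
  rintro x (h | h)
  · exact mem_iUnion₂.2 ⟨0, 1, by simpa [latticePoint] using h⟩
  · exact mem_iUnion₂.2 ⟨-1, 1, by simpa [latticePoint, neg_add_eq_sub] using h⟩

theorem neg_iUnion_closerHalfPlane_latticePoint :
    -⋃ (m : ℤ) (n : ℤ), closerHalfPlane (latticePoint a b m n) =
      ⋃ (m : ℤ) (n : ℤ), closerHalfPlane (latticePoint a b m n) := by
  ext x
  simp only [mem_neg, mem_iUnion]
  constructor <;> rintro ⟨m, n, h⟩ <;> refine ⟨-m, -n, ?_⟩
  · rwa [latticePoint_neg, ← neg_mem_closerHalfPlane_neg, neg_neg]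
  · rwa [latticePoint_neg, neg_mem_closerHalfPlane_neg]

theorem box_inter_iUnion_closerHalfPlane (ha₀ : 0 ≤ a) (ha : a ≤ 1 / 2) (hb : 1 / 2 ≤ b) :
    box b ∩ ⋃ (m : ℤ) (n : ℤ), closerHalfPlane (latticePoint a b m n) =
      box b ∩ (relevantHalfPlanes a b ∪ -relevantHalfPlanes a b) := by
  refine Subset.antisymm (fun x ⟨hx, hmn⟩ => ⟨hx, ?_⟩)
    (inter_subset_inter_right _ (union_subset relevantHalfPlanes_subset_iUnion ?_))
  · by_contra! h
    obtain ⟨m, n, hmn⟩ := mem_iUnion₂.1 hmn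
    exact notMem_closerHalfPlane_latticePoint ha₀ ha hb hx (fun h' => h (Or.inl h'))
      (fun h' => h (Or.inr h')) m n hmn
  · rw [← neg_iUnion_closerHalfPlane_latticePoint]
    exact neg_subset_neg.2 relevantHalfPlanes_subset_iUnion

theorem box_inter_closerHalfPlane_eq {c : ℝ} (hc₀ : 0 ≤ c) (hb : 1 / 2 ≤ b) :
    box b ∩ closerHalfPlane (c, b) = {p | p.1 ∈ Ioc (c / 2) (1 / 2) ∧
      p.2 ∈ Ioc ((c ^ 2 + b ^ 2 - 2 * c * p.1) / (2 * b)) (b / 2)} := by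
  ext ⟨u, w⟩
  simp only [box, closerHalfPlane, mem_inter_iff, mem_prod, mem_Icc, mem_Ioc, mem_ofPred_eq,
    div_lt_iff₀ (by positivity : (0 : ℝ) < 2 * b)]
  constructor
  · rintro ⟨⟨⟨-, hu⟩, -, hw⟩, h⟩
    refine ⟨⟨?_, hu⟩, by linarith, hw⟩
    by_contra! hu'
    nlinarith [mul_nonneg hc₀ (by linarith : 0 ≤ c / 2 - u)]
  · rintro ⟨⟨hu₁, hu₂⟩, hw₁, hw₂⟩
    refine ⟨⟨⟨by linarith, hu₂⟩, ?_, hw₂⟩, by linarith⟩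
    nlinarith [mul_nonneg hc₀ (by linarith : 0 ≤ 1 / 2 - u)]

theorem volume_box_inter_closerHalfPlane {c : ℝ} (hc₀ : 0 ≤ c) (hc₁ : c ≤ 1)
    (hb : 1 / 2 ≤ b) :
    volume (box b ∩ closerHalfPlane (c, b)) = ENNReal.ofReal (c * (1 - c) ^ 2 / (8 * b)) := by
  rw [box_inter_closerHalfPlane_eq hc₀ hb, Measure.volume_eq_prod,
    volume_region_between_oc_eq_lintegral (f := fun u => (c ^ 2 + b ^ 2 - 2 * c * u) / (2 * b))
      (g := fun _ => b / 2) (by fun_prop) measurable_const measurableSet_Ioc,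
    ← ofReal_integral_eq_lintegral_ofReal (Continuous.integrableOn_Ioc (by fun_prop)) ?nonneg,
    ← intervalIntegral.integral_of_le (by linarith)]
  case nonneg =>
    filter_upwards [ae_restrict_mem measurableSet_Ioc] with u hu
    rw [Pi.zero_apply, sub_nonneg, div_le_iff₀ (by positivity)]
    nlinarith [mul_nonneg hc₀ (by linarith [hu.1] : 0 ≤ 2 * u - c)]
  have hlin : (fun u => b / 2 - (c ^ 2 + b ^ 2 - 2 * c * u) / (2 * b)) =
      fun u => c / b * u - c ^ 2 / (2 * b) := by
    funext u; field_simp; ring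
  rw [hlin, intervalIntegral.integral_sub ((continuous_const_mul _).intervalIntegrable _ _)
    intervalIntegrable_const, intervalIntegral.integral_const_mul, integral_id,
    intervalIntegral.integral_const, smul_eq_mul]
  congr 1
  field_simp
  ring

theorem volume_box_inter_closerHalfPlane_neg_fst (c d : ℝ) :
    volume (box b ∩ closerHalfPlane (-c, d)) = volume (box b ∩ closerHalfPlane (c, d)) := by
  have hρ : MeasurePreserving (Prod.map (Neg.neg : ℝ → ℝ) (id : ℝ → ℝ)) :=
    (Measure.measurePreserving_neg volume).prod (MeasurePreserving.id volume)
  rw [← hρ.measure_preimage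
    ((measurableSet_box b).inter (measurableSet_closerHalfPlane _)).nullMeasurableSet]
  congr 1
  ext ⟨u, w⟩
  simp only [box, closerHalfPlane, mem_inter_iff, mem_preimage, Prod.map, mem_prod, mem_Icc,
    mem_ofPred_eq, id]
  constructor <;> rintro ⟨⟨⟨h₁, h₂⟩, h₃⟩, h₄⟩ <;>
    exact ⟨⟨⟨by linarith, by linarith⟩, h₃⟩, by linarith⟩

theorem box_inter_relevantHalfPlanes_subset (ha₀ : 0 ≤ a) (ha : a ≤ 1 / 2) (hb : 1 / 2 ≤ b) :
    box b ∩ relevantHalfPlanes a b ⊆ {x | 0 < x.2} := by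
  rintro ⟨u, w⟩ ⟨⟨⟨hu₁, hu₂⟩, -, hw⟩, h | h⟩ <;>
    simp only [closerHalfPlane, mem_ofPred_eq] at h ⊢
  · nlinarith [mul_nonneg ha₀ (by linarith : 0 ≤ 1 / 2 - u)]
  · nlinarith [mul_nonneg (by linarith : 0 ≤ 1 - a) (by linarith : 0 ≤ u + 1 / 2)]

theorem disjoint_box_inter_closerHalfPlane (ha : a ≤ 1 / 2) (hb : 0 ≤ b) :
    Disjoint (box b ∩ closerHalfPlane (a, b)) (box b ∩ closerHalfPlane (a - 1, b)) := by
  rw [disjoint_left]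
  rintro ⟨u, w⟩ ⟨⟨⟨hu₁, -⟩, -, hw⟩, h₁⟩ ⟨-, h₂⟩
  simp only [closerHalfPlane, mem_ofPred_eq] at h₁ h₂
  nlinarith [mul_nonneg (by linarith : 0 ≤ 1 - 2 * a) (by linarith : 0 ≤ u + 1 / 2),
    mul_nonneg hb (by linarith : 0 ≤ b / 2 - w)]

theorem volume_box_inter_relevantHalfPlanes (ha₀ : 0 ≤ a) (ha : a ≤ 1 / 2) (hb : 1 / 2 ≤ b) :
    volume (box b ∩ relevantHalfPlanes a b) = ENNReal.ofReal (a * (1 - a) / (8 * b)) := by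
  rw [relevantHalfPlanes, inter_union_distrib_left,
    measure_union (disjoint_box_inter_closerHalfPlane ha (by linarith))
      ((measurableSet_box b).inter (measurableSet_closerHalfPlane _)),
    show a - 1 = -(1 - a) by ring, volume_box_inter_closerHalfPlane_neg_fst,
    volume_box_inter_closerHalfPlane ha₀ (by linarith) hb,
    volume_box_inter_closerHalfPlane (by linarith) (by linarith) hb,
    ← ENNReal.ofReal_add (by positivity)
      (div_nonneg (mul_nonneg (by linarith) (sq_nonneg _)) (by linarith))]
  congr 1
  field_simp
  ring

theorem volume_box_inter_relevantHalfPlanes_union_neg (ha₀ : 0 ≤ a) (ha : a ≤ 1 / 2)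
    (hb : 1 / 2 ≤ b) :
    volume (box b ∩ (relevantHalfPlanes a b ∪ -relevantHalfPlanes a b)) =
      ENNReal.ofReal (a * (1 - a) / (4 * b)) := by
  set T := box b ∩ relevantHalfPlanes a b
  have hT : MeasurableSet T := (measurableSet_box b).inter
    ((measurableSet_closerHalfPlane _).union (measurableSet_closerHalfPlane _))
  have hdisj : Disjoint T (-T) := by
    rw [disjoint_left]
    intro x hx hx'
    have h₁ : 0 < x.2 := box_inter_relevantHalfPlanes_subset ha₀ ha hb hx
    have h₂ : 0 < (-x).2 := box_inter_relevantHalfPlanes_subset ha₀ ha hb hx'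
    rw [Prod.snd_neg] at h₂
    linarith
  rw [inter_union_distrib_left, ← neg_box b, ← inter_neg, neg_box, measure_union hdisj hT.neg,
    Measure.measure_neg, volume_box_inter_relevantHalfPlanes ha₀ ha hb, ← two_mul,
    ← ENNReal.ofReal_ofNat 2, ← ENNReal.ofReal_mul zero_le_two]
  congr 1
  field_simp
  ring

end Babai

/-- Theorem 1 of the paper: for a Minkowski-reduced basis `{(1,0),(a,b)}` with
`0 ≤ a ≤ 1/2`, `b > 0`, `a² + b² ≥ 1`, the fraction of the Babai cell
`B(0) = [−1/2,1/2] × [−b/2,b/2]` lying outside the Voronoi cell `V(0)` is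
`(a − a²)/(4b²)`. -/
theorem babai_error_probability (a b : ℝ)
    (ha0 : 0 ≤ a) (ha : a ≤ 1 / 2) (hb : 0 < b) (hab : 1 ≤ a ^ 2 + b ^ 2)
    (v₁ v₂ : EuclideanSpace ℝ (Fin 2))
    (hv₁ : v₁ 0 = 1 ∧ v₁ 1 = 0)
    (hv₂ : v₂ 0 = a ∧ v₂ 1 = b)
    (Λ : Set (EuclideanSpace ℝ (Fin 2)))
    (hΛ : Λ = {p | ∃ m n : ℤ, p = m • v₁ + n • v₂})
    (V₀ : Set (EuclideanSpace ℝ (Fin 2)))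
    (hV₀ : V₀ = {x | ∀ p ∈ Λ, ‖x‖ ≤ ‖x - p‖})
    (B₀ : Set (EuclideanSpace ℝ (Fin 2)))
    (hB₀ : B₀ = {x | x 0 ∈ Set.Icc (-(1 / 2) : ℝ) (1 / 2) ∧
                      x 1 ∈ Set.Icc (-(b / 2)) (b / 2)}) :
    (volume (B₀ ∩ V₀ᶜ)).toReal / (volume B₀).toReal = (a - a ^ 2) / (4 * b ^ 2) := by
  have hb₂ : 1 / 2 ≤ b := by nlinarith
  let φ : EuclideanSpace ℝ (Fin 2) ≃ᵐ ℝ × ℝ :=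
    (MeasurableEquiv.toLp 2 (Fin 2 → ℝ)).symm.trans MeasurableEquiv.finTwoArrow
  have hφ : MeasurePreserving φ := (volume_preserving_finTwoArrow ℝ).comp
    (EuclideanSpace.volume_preserving_symm_measurableEquiv_toLp _)
  have hB : B₀ = φ ⁻¹' Babai.box b := by rw [hB₀]; rfl
  have hV : V₀ᶜ = φ ⁻¹' ⋃ (m : ℤ) (n : ℤ), Babai.closerHalfPlane (Babai.latticePoint a b m n) := by
    ext x
    simp [hV₀, hΛ, Babai.norm_sub_lt_norm_iff_mem_closerHalfPlane, φ, Babai.latticePoint,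
      hv₁, hv₂]
  rw [hB, hV, ← preimage_inter, hφ.measure_preimage_equiv, hφ.measure_preimage_equiv,
    Babai.box_inter_iUnion_closerHalfPlane ha0 ha hb₂,
    Babai.volume_box_inter_relevantHalfPlanes_union_neg ha0 ha hb₂, Babai.volume_box,
    ENNReal.toReal_ofReal (div_nonneg (by nlinarith) (by linarith)), ENNReal.toReal_ofReal hb.le]
  field_simp
end

section
/- Let a, b be real numbers with 0 ≤ a ≤ 1/2, b > 0 and a² + b² ≥ 1. Then 0 ≤ (a − a²)/(4b²) ≤ 1/12. -/
/-- Corollary: for any two-dimensional lattice with Minkowski-reduced basis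
`{(1,0),(a,b)}` (so `0 ≤ a ≤ 1/2`, `b > 0`, `a² + b² ≥ 1`), the error probability of
the Babai partition satisfies `0 ≤ Pₑ = (a − a²)/(4b²) ≤ 1/12`. -/
theorem error_probability_bounds (a b : ℝ)
    (ha0 : 0 ≤ a) (ha : a ≤ 1 / 2) (hb : 0 < b) (hab : 1 ≤ a ^ 2 + b ^ 2) :
    0 ≤ (a - a ^ 2) / (4 * b ^ 2) ∧ (a - a ^ 2) / (4 * b ^ 2) ≤ 1 / 12 := by
  have hb2 : 0 < 4 * b ^ 2 := by positivity
  constructor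
  · apply div_nonneg _ hb2.le
    nlinarith
  · rw [div_le_iff₀ hb2]
    nlinarith [sq_nonneg (2*a - 1), sq_nonneg a]
end

section
/- Let v₁, v₂ ∈ ℝ² be linearly independent vectors with ‖v₁‖ ≤ ‖v₂‖ and 2|⟨v₁, v₂⟩| ≤ ‖v₁‖². Then for all integers m, n: if (m,n) ≠ (0,0) then ‖m·v₁ + n·v₂‖ ≥ ‖v₁‖, and if n ≠ 0 then ‖m·v₁ + n·v₂‖ ≥ ‖v₂‖. In other words, for a Minkowski-reduced basis of a two-dimensional lattice, the norms of the basis vectors achieve the successive minima of the lattice. -/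
open scoped RealInnerProductSpace

/-- For a Minkowski-reduced basis `{v₁, v₂}` of a two-dimensional lattice, the norms of
the basis vectors achieve the successive minima: every nonzero lattice vector
`m•v₁ + n•v₂` has norm at least `‖v₁‖`, and at least `‖v₂‖` whenever `n ≠ 0`. -/
theorem minkowski_reduced_achieves_successive_minima
    (v₁ v₂ : EuclideanSpace ℝ (Fin 2))
    (hli : LinearIndependent ℝ ![v₁, v₂])
    (hn : ‖v₁‖ ≤ ‖v₂‖) (hm : 2 * |⟪v₁, v₂⟫| ≤ ‖v₁‖ ^ 2) :
    ∀ m n : ℤ, ((m, n) ≠ (0, 0) → ‖m • v₁ + n • v₂‖ ≥ ‖v₁‖) ∧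
      (n ≠ 0 → ‖m • v₁ + n • v₂‖ ≥ ‖v₂‖) := by
  intro m n
  have key : ∀ x y : ℝ, ‖x • v₁ + y • v₂‖ ^ 2
      = x ^ 2 * ‖v₁‖ ^ 2 + 2 * x * y * ⟪v₁, v₂⟫ + y ^ 2 * ‖v₂‖ ^ 2 := by
    intro x y
    rw [norm_add_sq_real, norm_smul, norm_smul, real_inner_smul_left, real_inner_smul_right,
      mul_pow, mul_pow, Real.norm_eq_abs, Real.norm_eq_abs, sq_abs, sq_abs]
    ring
  have hcast : (m • v₁ + n • v₂ : EuclideanSpace ℝ (Fin 2))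
      = (m : ℝ) • v₁ + (n : ℝ) • v₂ := by
    rw [Int.cast_smul_eq_zsmul, Int.cast_smul_eq_zsmul]
  have h1 : (0:ℝ) ≤ ‖v₁‖ := norm_nonneg _
  have h2 : (0:ℝ) ≤ ‖v₂‖ := norm_nonneg _
  have hnn : (0:ℝ) ≤ ‖(m : ℝ) • v₁ + (n : ℝ) • v₂‖ := norm_nonneg _
  have habs : 2 * (m:ℝ) * n * ⟪v₁, v₂⟫ ≥ -(2 * (|(m:ℝ)| * |(n:ℝ)|) * |⟪v₁, v₂⟫|) := by
    have := neg_abs_le (2 * (m:ℝ) * n * ⟪v₁, v₂⟫)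
    have heq : |2 * (m:ℝ) * n * ⟪v₁, v₂⟫| = 2 * (|(m:ℝ)| * |(n:ℝ)|) * |⟪v₁, v₂⟫| := by
      rw [abs_mul, abs_mul, abs_mul, abs_two]; ring
    linarith [heq ▸ this]
  have hinner : 2 * (|(m:ℝ)| * |(n:ℝ)|) * |⟪v₁, v₂⟫| ≤ |(m:ℝ)| * |(n:ℝ)| * ‖v₁‖ ^ 2 := by
    have h0 : (0:ℝ) ≤ |(m:ℝ)| * |(n:ℝ)| := mul_nonneg (abs_nonneg _) (abs_nonneg _)
    nlinarith [mul_le_mul_of_nonneg_left hm h0]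
  have main2 : n ≠ 0 → ‖m • v₁ + n • v₂‖ ≥ ‖v₂‖ := by
    intro hn0
    have hF : (1:ℤ) ≤ m ^ 2 - |m| * |n| + n ^ 2 := by
      have h1n : 1 ≤ |n| := Int.one_le_abs hn0
      have h4 : 3 ≤ 4 * (m ^ 2 - |m| * |n| + n ^ 2) := by
        nlinarith [sq_nonneg (2 * |m| - |n|), sq_abs m, sq_abs n]
      omega
    have hFr : (1:ℝ) ≤ (m:ℝ) ^ 2 - |(m:ℝ)| * |(n:ℝ)| + (n:ℝ) ^ 2 := by
      exact_mod_cast hF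
    have hN1 : (1:ℝ) ≤ |(n:ℝ)| := by exact_mod_cast Int.one_le_abs hn0
    have hab : ‖v₁‖ ^ 2 ≤ ‖v₂‖ ^ 2 := by nlinarith
    have hsq : ‖v₂‖ ^ 2 ≤ ‖(m : ℝ) • v₁ + (n : ℝ) • v₂‖ ^ 2 := by
      rw [key]
      have hp1 : 0 ≤ ((m:ℝ) ^ 2 - |(m:ℝ)| * |(n:ℝ)| + (n:ℝ) ^ 2 - 1) * ‖v₁‖ ^ 2 :=
        mul_nonneg (by linarith) (sq_nonneg _)
      have hp2 : 0 ≤ ((n:ℝ) ^ 2 - 1) * (‖v₂‖ ^ 2 - ‖v₁‖ ^ 2) :=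
        mul_nonneg (by nlinarith [sq_abs (n:ℝ)]) (by linarith)
      nlinarith [sq_abs (n:ℝ)]
    rw [hcast]
    exact (pow_le_pow_iff_left₀ h2 hnn two_ne_zero).mp hsq
  refine ⟨?_, main2⟩
  intro hmn
  rcases eq_or_ne n 0 with rfl | hn0
  · have hm0 : m ≠ 0 := by simpa using hmn
    rw [hcast]
    simp only [Int.cast_zero, zero_smul, add_zero]
    rw [norm_smul, Real.norm_eq_abs]
    have : (1:ℝ) ≤ |(m:ℝ)| := by exact_mod_cast Int.one_le_abs hm0
    nlinarith
  · exact le_trans hn (main2 hn0)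
end

section
/- Let x, y be real numbers and q a positive integer such that the fractional part of y is s/q for some s ∈ {0, 1, …, q−1}. Let s* be the largest element of {0,…,q−1} with round(x − s*/q) = round(x) (such s* exists since s = 0 qualifies). Then round(x − y) = round(x) − ⌊y⌋ if s ≤ s*, and round(x − y) = round(x) − ⌊y⌋ − 1 if s > s*. Hence the nearest-plane coefficient round(x − y) is computable from round(x), s*, ⌊y⌋ and s alone. -/
/-!
Since `fract y = s/q`, we have `x - y = (x - s/q) - ⌊y⌋`, so `round (x - y) = round (x - s/q) - ⌊y⌋`.
Because `round` is monotone and commutes with integer shifts, lowering `x` by an amount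
`t ∈ [0, 1]` lowers `round x` by `0` or `1`, and the `t` for which it stays unchanged form an
initial segment; by maximality of `s*`, among the `t = s/q` that segment ends at `s*/q`.
-/

section Round

variable {α : Type*} [Field α] [LinearOrder α] [IsStrictOrderedRing α] [FloorRing α]

theorem round_monotone : Monotone (round : α → ℤ) := fun a b hab => by
  simpa only [round_eq] using Int.floor_mono (by linarith : a + 1 / 2 ≤ b + 1 / 2)

theorem round_sub_eq_round_sub_fract_sub_floor (x y : α) :
    round (x - y) = round (x - Int.fract y) - ⌊y⌋ := by
  rw [← round_sub_intCast, Int.fract, sub_sub, sub_add_cancel]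

theorem round_sub_le_round {t : α} (x : α) (ht : 0 ≤ t) : round (x - t) ≤ round x :=
  round_monotone (sub_le_self x ht)

theorem round_sub_one_le_round_sub {t : α} (x : α) (ht : t ≤ 1) :
    round x - 1 ≤ round (x - t) := by
  rw [← round_sub_one]
  exact round_monotone (sub_le_sub_left ht x)

theorem round_sub_eq_round_of_le {t t' : α} {x : α} (ht : 0 ≤ t) (htt' : t ≤ t')
    (h : round (x - t') = round x) : round (x - t) = round x :=
  le_antisymm (round_sub_le_round x ht) (h ▸ round_monotone (sub_le_sub_left htt' x))

theorem round_sub_eq_round_sub_one_of_ne {t : α} {x : α} (ht₀ : 0 ≤ t) (ht₁ : t ≤ 1)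
    (h : round (x - t) ≠ round x) : round (x - t) = round x - 1 := by
  have := round_sub_le_round x ht₀
  have := round_sub_one_le_round_sub x ht₁
  omega

end Round

theorem centralized_protocol_correctness_general (x y : ℝ) (q s sStar : ℕ)
    (hs : s < q) (hfract : Int.fract y = (s : ℝ) / q)
    (hround : round (x - (sStar : ℝ) / q) = round x)
    (hlargest : ∀ t : ℕ, t < q → round (x - (t : ℝ) / q) = round x → t ≤ sStar) :
    (s ≤ sStar → round (x - y) = round x - ⌊y⌋) ∧
    (sStar < s → round (x - y) = round x - ⌊y⌋ - 1) := by
  have hq : (0 : ℝ) < q := by exact_mod_cast (Nat.zero_le s).trans_lt hs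
  have hs₀ : (0 : ℝ) ≤ s / q := by positivity
  have hs₁ : (s : ℝ) / q ≤ 1 := (div_le_one hq).2 (by exact_mod_cast hs.le)
  rw [round_sub_eq_round_sub_fract_sub_floor, hfract]
  refine ⟨fun hle => ?_, fun hlt => ?_⟩
  · rw [round_sub_eq_round_of_le hs₀ (by gcongr) hround]
  · have hne : round (x - (s : ℝ) / q) ≠ round x := fun h => (hlargest s hs h).not_gt hlt
    rw [round_sub_eq_round_sub_one_of_ne hs₀ hs₁ hne, sub_right_comm]

/-- Computational core of Theorem 2 (correctness of the centralized protocol): if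
`fract y = s/q` with `s ∈ {0,…,q−1}` and `s*` is the largest element of `{0,…,q−1}`
with `round(x − s*/q) = round x`, then `round(x − y) = round x − ⌊y⌋` when `s ≤ s*`,
and `round(x − y) = round x − ⌊y⌋ − 1` when `s > s*`. -/
theorem centralized_protocol_correctness (x y : ℝ) (q s sStar : ℕ) (hq : 0 < q)
    (hs : s < q) (hfract : Int.fract y = (s : ℝ) / q)
    (hsStar : sStar < q)
    (hround : round (x - (sStar : ℝ) / q) = round x)
    (hlargest : ∀ t : ℕ, t < q → round (x - (t : ℝ) / q) = round x → t ≤ sStar) :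
    (s ≤ sStar → round (x - y) = round x - ⌊y⌋) ∧
    (sStar < s → round (x - y) = round x - ⌊y⌋ - 1) :=
  centralized_protocol_correctness_general x y q s sStar hs hfract hround hlargest
end
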